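/- arXiv:1910.13846 — 9 statements merged into one kernel-verified Lean document; each statement's English description precedes it below -/
import Mathlib

section
/- Let S be a complete prefix code over Σ = {s₁, s₂} and let ḡ ∈ R(S). Set A = {h ∈ Σ* : ḡh ∈ R(S)} and S' = ∂A = {h ∈ A : h s₁ ∉ A and h s₂ ∉ A}. Then S' is a complete prefix code and R(S') = A. -/
/-- Words over Σ = {s₁, s₂} are modeled as `List Bool`. -/
def IsPrefixCode (S : Set (List Bool)) : Prop :=
  ∀ g ∈ S, ∀ h ∈ S, g <+: h → g = h

/-- A complete prefix code: a finite prefix code such that every word of length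
at least max{|g| : g ∈ S} has a prefix in S. -/
def IsCPC (S : Set (List Bool)) : Prop :=
  S.Finite ∧ IsPrefixCode S ∧
    ∀ w : List Bool, (∀ g ∈ S, g.length ≤ w.length) → ∃ g ∈ S, g <+: w

/-- R(S): the set of all prefixes of elements of S. -/
def treeR (S : Set (List Bool)) : Set (List Bool) :=
  {g | ∃ h ∈ S, g <+: h}

/-- Boundary of a subset of Σ*. -/
def bdry (P : Set (List Bool)) : Set (List Bool) :=
  {g | g ∈ P ∧ g ++ [true] ∉ P ∧ g ++ [false] ∉ P}

lemma treeR_prefix_closed {S : Set (List Bool)} {g h : List Bool}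
    (hgh : g <+: h) (hh : h ∈ treeR S) : g ∈ treeR S := by
  obtain ⟨k, hk, hhk⟩ := hh
  exact ⟨k, hk, hgh.trans hhk⟩

lemma treeR_finite {S : Set (List Bool)} (hS : S.Finite) : (treeR S).Finite := by
  have : treeR S ⊆ ⋃ h ∈ S, {g | g ∈ h.inits} := by
    intro g hg
    obtain ⟨h, hh, hgh⟩ := hg
    exact Set.mem_biUnion hh (by simpa [List.mem_inits] using hgh)
  exact (Set.Finite.biUnion hS (fun h _ => List.finite_toSet _)).subset this

/-- In the tree of a CPC, a node with one child has both children. -/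
lemma two_children {S : Set (List Bool)} (hS : IsCPC S) {g : List Bool} (b : Bool)
    (hgb : g ++ [b] ∈ treeR S) : g ++ [!b] ∈ treeR S := by
  obtain ⟨hfin, hpc, hcomp⟩ := hS
  -- get a bound on lengths in S
  obtain ⟨N, hN⟩ : ∃ N, ∀ s ∈ S, s.length ≤ N := by
    obtain ⟨N, hN⟩ := (hfin.image List.length).bddAbove
    exact ⟨N, fun s hs => hN ⟨s, hs, rfl⟩⟩
  set w : List Bool := (g ++ [!b]) ++ List.replicate N true with hw
  obtain ⟨s, hsS, hsw⟩ := hcomp w (by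
    intro t ht
    have := hN t ht
    simp [hw]
    omega)
  have hgw : g ++ [!b] <+: w := ⟨List.replicate N true, rfl⟩
  rcases List.prefix_or_prefix_of_prefix hsw hgw with hc | hc
  · -- s <+: g ++ [!b]
    rcases Nat.lt_or_ge s.length (g ++ [!b]).length with hlen | hlen
    · -- s <+: g
      have hsg : s <+: g := by
        refine List.prefix_of_prefix_length_le hc (⟨[!b], rfl⟩) ?_
        simp at hlen ⊢; omega
      obtain ⟨h₁, hh₁, hgbh₁⟩ := hgb
      have hgh₁ : g <+: h₁ := (List.prefix_append g [b]).trans hgbh₁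
      have hse : s = h₁ := hpc s hsS h₁ hh₁ (hsg.trans hgh₁)
      have hgeq : g = h₁ :=
        hgh₁.eq_of_length (le_antisymm hgh₁.length_le (hse ▸ hsg).length_le)
      have hlen2 := hgbh₁.length_le
      rw [← hgeq] at hlen2
      exact absurd hlen2 (by simp)
    · have heq : s = g ++ [!b] := hc.eq_of_length (le_antisymm hc.length_le hlen)
      exact ⟨s, hsS, by simp [heq]⟩
  · exact ⟨s, hsS, hc⟩

/-- Quotienting a CPC at a node of R(S) yields a CPC whose tree is the quotient tree. -/
theorem stmt2 (S : Set (List Bool)) (hS : IsCPC S)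
    (gbar : List Bool) (hg : gbar ∈ treeR S) :
    IsCPC (bdry {h | gbar ++ h ∈ treeR S}) ∧
    treeR (bdry {h | gbar ++ h ∈ treeR S}) = {h | gbar ++ h ∈ treeR S} := by
  set A : Set (List Bool) := {h | gbar ++ h ∈ treeR S} with hA
  have hA0 : ([] : List Bool) ∈ A := by simpa [hA] using hg
  have hApc : ∀ {h₁ h₂ : List Bool}, h₁ <+: h₂ → h₂ ∈ A → h₁ ∈ A := by
    intro h₁ h₂ h12 h2A
    exact treeR_prefix_closed ((List.prefix_append_right_inj gbar).2 h12) h2A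
  have hAfin : A.Finite := by
    have : A ⊆ (fun h => gbar ++ h) ⁻¹' (treeR S) := fun h hh => hh
    exact Set.Finite.preimage (Set.injOn_of_injective
      (fun a b hab => by simpa using hab)) ((treeR_finite hS.1).subset (by
        intro x hx; exact hx)) |>.subset this
  have hA2 : ∀ {h : List Bool} (b : Bool), h ++ [b] ∈ A → h ++ [!b] ∈ A := by
    intro h b hb
    have : (gbar ++ h) ++ [b] ∈ treeR S := by simpa [hA, List.append_assoc] using hb
    have := two_children hS b this
    simpa [hA, List.append_assoc] using this
  -- every element of A extends to a boundary element
  have hmax : ∀ h ∈ A, ∃ q ∈ bdry A, h <+: q := by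
    intro h hh
    obtain ⟨q, ⟨hqA, hhq⟩, hqmax⟩ := Set.Finite.exists_maximalFor List.length
      {q | q ∈ A ∧ h <+: q} (hAfin.subset (fun x hx => hx.1)) ⟨h, hh, List.prefix_refl _⟩
    refine ⟨q, ⟨hqA, ?_, ?_⟩, hhq⟩ <;>
    · intro hc
      have := hqmax ⟨hc, hhq.trans ⟨_, rfl⟩⟩ (by simp)
      simp at this
  have hbd : bdry A ⊆ A := fun x hx => hx.1
  refine ⟨⟨hAfin.subset hbd, ?_, ?_⟩, ?_⟩
  · -- prefix code
    intro g hgS h hhS hgh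
    by_contra hne
    obtain ⟨t, ht⟩ := hgh
    have htne : t ≠ [] := by rintro rfl; simp at ht; exact hne ht
    obtain ⟨b, t', rfl⟩ := List.exists_cons_of_ne_nil htne
    have : g ++ [b] ∈ A := hApc ⟨t', by simp [← ht]⟩ hhS.1
    cases b
    · exact hgS.2.2 this
    · exact hgS.2.1 this
  · -- completeness
    intro w hw
    obtain ⟨p, ⟨hpA, hpw⟩, hpmax⟩ := Set.Finite.exists_maximalFor List.length
      {p | p ∈ A ∧ p <+: w} (hAfin.subset (fun x hx => hx.1))
      ⟨[], hA0, List.nil_prefix⟩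
    rcases eq_or_ne p w with rfl | hne
    · obtain ⟨q, hqbd, hpq⟩ := hmax p hpA
      have : p = q := hpq.eq_of_length (le_antisymm hpq.length_le (hw q hqbd))
      exact ⟨p, this ▸ hqbd, List.prefix_refl _⟩
    · obtain ⟨t, ht⟩ := hpw
      have htne : t ≠ [] := by rintro rfl; simp at ht; exact hne ht
      obtain ⟨b, t', rfl⟩ := List.exists_cons_of_ne_nil htne
      have hbnot : p ++ [b] ∉ A := by
        intro hc
        have := hpmax ⟨hc, ⟨t', by simp [← ht]⟩⟩ (by simp)
        simp at this
      have hbnot' : p ++ [!b] ∉ A := fun hc => hbnot (by simpa using hA2 (!b) hc)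
      have hpre : p <+: w := ⟨b :: t', ht⟩
      cases b with
      | true =>
        refine ⟨p, ⟨hpA, ?_, ?_⟩, hpre⟩
        · exact hbnot
        · exact hbnot'
      | false =>
        refine ⟨p, ⟨hpA, ?_, ?_⟩, hpre⟩
        · exact hbnot'
        · exact hbnot
  · -- treeR (bdry A) = A
    apply Set.Subset.antisymm
    · rintro x ⟨q, hq, hxq⟩
      exact hApc hxq (hbd hq)
    · intro h hh
      obtain ⟨q, hqbd, hhq⟩ := hmax h hh
      exact ⟨q, hqbd, hhq⟩
end

section
/- Let S₁ and S₂ be complete prefix codes over Σ = {s₁, s₂}, and let ḡ ∈ R(S₁). Define S = (S₁ \ {ḡh : h ∈ Σ*}) ∪ ḡS₂, where ḡS₂ = {ḡh : h ∈ S₂}. Then S is a complete prefix code, and R(S) = (R(S₁) \ {ḡh ∈ R(S₁) : h ∈ Σ*, h ≠ ε}) ∪ ḡR(S₂). -/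
lemma cpc_nonempty {S : Set (List Bool)} (h : IsCPC S) : S.Nonempty := by
  rcases S.eq_empty_or_nonempty with he | hn
  · obtain ⟨g, hg, -⟩ := h.2.2 [] (by simp [he])
    exact absurd hg (by simp [he])
  · exact hn

/-- Replacing the part of a CPC above a node ḡ by a translated CPC yields a CPC. -/
theorem stmt3 (S₁ S₂ : Set (List Bool)) (h₁ : IsCPC S₁) (h₂ : IsCPC S₂)
    (gbar : List Bool) (hg : gbar ∈ treeR S₁) :
    IsCPC ((S₁ \ {w | gbar <+: w}) ∪ (fun h => gbar ++ h) '' S₂) ∧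
    treeR ((S₁ \ {w | gbar <+: w}) ∪ (fun h => gbar ++ h) '' S₂) =
      (treeR S₁ \ {w | ∃ h : List Bool, h ≠ [] ∧ w = gbar ++ h}) ∪
        (fun h => gbar ++ h) '' treeR S₂ := by
  obtain ⟨hS₁fin, hS₁pc, hS₁c⟩ := h₁
  obtain ⟨hS₂fin, hS₂pc, hS₂c⟩ := h₂
  obtain ⟨e, he⟩ := cpc_nonempty ⟨hS₂fin, hS₂pc, hS₂c⟩
  obtain ⟨f₀, hf₀S, hgf₀⟩ := hg
  -- key: an element of S₁ which is a prefix of gbar must extend gbar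
  have key : ∀ g ∈ S₁, g <+: gbar → gbar <+: g := by
    intro g hgS₁ hpre
    have := hS₁pc g hgS₁ f₀ hf₀S (hpre.trans hgf₀)
    rw [this]; exact hgf₀
  -- prefix code property
  have hpc : IsPrefixCode ((S₁ \ {w | gbar <+: w}) ∪ (fun h => gbar ++ h) '' S₂) := by
    rintro g hgS h hhS hpre
    rcases hgS with ⟨hgS₁, hgP⟩ | ⟨g₂, hg₂, rfl⟩
    · rcases hhS with ⟨hhS₁, hhP⟩ | ⟨h₂, hh₂, rfl⟩
      · exact hS₁pc g hgS₁ h hhS₁ hpre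
      · exfalso
        rcases List.prefix_or_prefix_of_prefix hpre (List.prefix_append gbar h₂) with hc | hc
        · exact hgP (key g hgS₁ hc)
        · exact hgP hc
    · rcases hhS with ⟨hhS₁, hhP⟩ | ⟨h₂, hh₂, rfl⟩
      · exact absurd ((List.prefix_append gbar g₂).trans hpre) hhP
      · rw [hS₂pc g₂ hg₂ h₂ hh₂ ((List.prefix_append_right_inj gbar).mp hpre)]
  -- completeness
  have hcomp : ∀ w : List Bool,
      (∀ g ∈ (S₁ \ {w | gbar <+: w}) ∪ (fun h => gbar ++ h) '' S₂, g.length ≤ w.length) →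
      ∃ g ∈ (S₁ \ {w | gbar <+: w}) ∪ (fun h => gbar ++ h) '' S₂, g <+: w := by
    intro w hw
    by_cases hgw : gbar <+: w
    · obtain ⟨u, rfl⟩ := hgw
      obtain ⟨h₂, hh₂, hpre⟩ := hS₂c u (fun g hgS₂ => by
        have := hw (gbar ++ g) (Or.inr ⟨g, hgS₂, rfl⟩)
        simp only [List.length_append] at this ⊢; omega)
      exact ⟨gbar ++ h₂, Or.inr ⟨h₂, hh₂, rfl⟩,
        (List.prefix_append_right_inj gbar).mpr hpre⟩
    · obtain ⟨N, hN⟩ := (hS₁fin.image List.length).bddAbove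
      obtain ⟨g, hgS₁, hpre⟩ := hS₁c (w ++ List.replicate N false) (fun g hgS₁ => by
        have := hN (Set.mem_image_of_mem List.length hgS₁)
        simp only [List.length_append, List.length_replicate]
        omega)
      by_cases hgg : gbar <+: g
      · exfalso
        rcases List.prefix_or_prefix_of_prefix (hgg.trans hpre)
          (List.prefix_append w (List.replicate N false)) with hc | hc
        · exact hgw hc
        · have hlen := hw (gbar ++ e) (Or.inr ⟨e, he, rfl⟩)
          simp only [List.length_append] at hlen
          have hwg : w = gbar := hc.eq_of_length (le_antisymm hc.length_le (by omega))
          exact hgw (hwg ▸ List.prefix_rfl)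
      · have hgS : g ∈ (S₁ \ {w | gbar <+: w}) ∪ (fun h => gbar ++ h) '' S₂ :=
          Or.inl ⟨hgS₁, hgg⟩
        rcases List.prefix_or_prefix_of_prefix hpre
          (List.prefix_append w (List.replicate N false)) with hc | hc
        · exact ⟨g, hgS, hc⟩
        · have : g = w := (hc.eq_of_length (le_antisymm hc.length_le (hw g hgS))).symm
          exact ⟨g, hgS, this ▸ List.prefix_rfl⟩
  refine ⟨⟨(hS₁fin.diff).union (hS₂fin.image _), hpc, hcomp⟩, ?_⟩
  ext g
  constructor
  · rintro ⟨f, hfS, hpre⟩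
    rcases hfS with ⟨hfS₁, hfP⟩ | ⟨f₂, hf₂, rfl⟩
    · refine Or.inl ⟨⟨f, hfS₁, hpre⟩, ?_⟩
      rintro ⟨h, hne, rfl⟩
      exact hfP ((List.prefix_append gbar h).trans hpre)
    · rcases List.prefix_or_prefix_of_prefix hpre (List.prefix_append gbar f₂) with hc | hc
      · refine Or.inl ⟨⟨f₀, hf₀S, hc.trans hgf₀⟩, ?_⟩
        rintro ⟨h, hne, rfl⟩
        have := hc.length_le
        simp only [List.length_append] at this
        exact hne (List.eq_nil_of_length_eq_zero (by omega))
      · obtain ⟨u, rfl⟩ := hc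
        exact Or.inr ⟨u, ⟨f₂, hf₂, (List.prefix_append_right_inj gbar).mp hpre⟩, rfl⟩
  · rintro (⟨⟨f, hfS₁, hpre⟩, hnot⟩ | ⟨u, ⟨f₂, hf₂, hpre⟩, rfl⟩)
    · by_cases hgf : gbar <+: f
      · rcases List.prefix_or_prefix_of_prefix hpre hgf with hc | hc
        · exact ⟨gbar ++ e, Or.inr ⟨e, he, rfl⟩, hc.trans (List.prefix_append gbar e)⟩
        · obtain ⟨h, rfl⟩ := hc
          have hnil : h = [] := by
            by_contra hne
            exact hnot ⟨h, hne, rfl⟩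
          subst hnil
          exact ⟨gbar ++ e, Or.inr ⟨e, he, rfl⟩, by
            simp⟩
      · exact ⟨f, Or.inl ⟨hfS₁, hgf⟩, hpre⟩
    · exact ⟨gbar ++ f₂, Or.inr ⟨f₂, hf₂, rfl⟩,
        (List.prefix_append_right_inj gbar).mpr hpre⟩
end

section
/- Let S₁ and S₂ be complete prefix codes over Σ = {s₁, s₂}, and let ḡ ∈ R(S₁). Define P = (R(S₁) \ {ḡh ∈ R(S₁) : h ∈ Σ*}) ∪ {ḡh : h ∈ R(S₂)}. Then P is prefix-closed and its boundary ∂P = {g ∈ P : g s₁ ∉ P and g s₂ ∉ P} is a complete prefix code. -/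
lemma mem_treeR_self {S : Set (List Bool)} {g : List Bool} (h : g ∈ S) : g ∈ treeR S :=
  ⟨g, h, List.prefix_refl g⟩

lemma treeR_closed {S : Set (List Bool)} {g p : List Bool} (hp : p <+: g)
    (hg : g ∈ treeR S) : p ∈ treeR S := by
  obtain ⟨h, hh, hgh⟩ := hg
  exact ⟨h, hh, hp.trans hgh⟩

lemma snoc_not_mem_treeR {S : Set (List Bool)} (hpc : IsPrefixCode S) {g : List Bool}
    (hgS : g ∈ S) (b : Bool) : g ++ [b] ∉ treeR S := by
  rintro ⟨h, hh, hgh⟩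
  have h1 : g <+: h := (List.prefix_append g [b]).trans hgh
  have h2 := hpc g hgS h hh h1
  subst h2
  have := hgh.length_le
  simp at this

lemma exists_snoc_mem_treeR {S : Set (List Bool)} {g : List Bool} (hg : g ∈ treeR S)
    (hgS : g ∉ S) : ∃ b, g ++ [b] ∈ treeR S := by
  obtain ⟨h, hh, t, rfl⟩ := hg
  cases t with
  | nil => simp only [List.append_nil] at hh; exact absurd hh hgS
  | cons b t' => exact ⟨b, g ++ (b :: t'), hh, ⟨t', by simp⟩⟩

lemma cpc_comparable {S : Set (List Bool)} (h : IsCPC S) (w : List Bool) :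
    ∃ g ∈ S, g <+: w ∨ w <+: g := by
  obtain ⟨M, hM⟩ := (h.1.image List.length).bddAbove
  obtain ⟨g, hg, hgw⟩ := h.2.2 (w ++ List.replicate M true) (by
    intro g hgS
    have : g.length ≤ M := hM (Set.mem_image_of_mem _ hgS)
    simp only [List.length_append, List.length_replicate]
    omega)
  exact ⟨g, hg, List.prefix_or_prefix_of_prefix hgw (List.prefix_append _ _)⟩

lemma prefix_snoc_eq {g gbar : List Bool} {b : Bool} (h : gbar <+: g ++ [b])
    (hn : ¬ gbar <+: g) : gbar = g ++ [b] := by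
  have hl : g.length + 1 ≤ gbar.length := by
    by_contra hlt
    exact hn (List.prefix_of_prefix_length_le h (List.prefix_append g [b]) (by omega))
  exact h.eq_of_length (by have := h.length_le; simp at this ⊢; omega)

lemma prefix_total_eq {g w : List Bool} (hc : g <+: w ∨ w <+: g)
    (hlen : g.length ≤ w.length) : g <+: w := by
  rcases hc with h | h
  · exact h
  · rw [h.eq_of_length (le_antisymm h.length_le hlen)]

/-- The glued support P is prefix-closed and its boundary is a CPC. -/
theorem stmt4 (S₁ S₂ : Set (List Bool)) (h₁ : IsCPC S₁) (h₂ : IsCPC S₂)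
    (gbar : List Bool) (hg : gbar ∈ treeR S₁) :
    (∀ g ∈ ((treeR S₁ \ {w | gbar <+: w}) ∪ (fun h => gbar ++ h) '' treeR S₂),
      ∀ p : List Bool, p <+: g →
        p ∈ ((treeR S₁ \ {w | gbar <+: w}) ∪ (fun h => gbar ++ h) '' treeR S₂)) ∧
    IsCPC (bdry ((treeR S₁ \ {w | gbar <+: w}) ∪ (fun h => gbar ++ h) '' treeR S₂)) := by
  obtain ⟨g₂, hg₂⟩ := cpc_nonempty h₂
  have hnil₂ : ([] : List Bool) ∈ treeR S₂ := ⟨g₂, hg₂, List.nil_prefix⟩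
  constructor
  · -- prefix-closedness
    rintro g (⟨hg1, hg2⟩ | ⟨h, hh, rfl⟩) p hp
    · exact Or.inl ⟨treeR_closed hp hg1, fun hc => hg2 (hc.trans hp)⟩
    · simp only at hp
      rcases List.prefix_or_prefix_of_prefix hp (List.prefix_append gbar h) with hpg | hgp
      · by_cases hc : gbar <+: p
        · have hpe : p = gbar := hpg.eq_of_length (le_antisymm hpg.length_le hc.length_le)
          exact Or.inr ⟨[], hnil₂, by simp [hpe]⟩
        · exact Or.inl ⟨treeR_closed hpg hg, hc⟩
      · obtain ⟨v, rfl⟩ := hgp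
        have hv : v <+: h := (List.prefix_append_right_inj gbar).mp hp
        exact Or.inr ⟨v, treeR_closed hv hh, rfl⟩
  · -- the boundary is a CPC
    have hbd : bdry ((treeR S₁ \ {w | gbar <+: w}) ∪ (fun h => gbar ++ h) '' treeR S₂)
        = (S₁ \ {w | gbar <+: w}) ∪ (fun h => gbar ++ h) '' S₂ := by
      ext g
      constructor
      · rintro ⟨hgP, hT, hF⟩
        rcases hgP with ⟨hg1, hg2⟩ | ⟨h, hh, rfl⟩
        · left
          refine ⟨?_, hg2⟩
          by_contra hgS
          obtain ⟨b, hb⟩ := exists_snoc_mem_treeR hg1 hgS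
          have hbP : g ++ [b] ∈ ((treeR S₁ \ {w | gbar <+: w}) ∪
              (fun h => gbar ++ h) '' treeR S₂) := by
            by_cases hc : gbar <+: g ++ [b]
            · exact Or.inr ⟨[], hnil₂, by simp [prefix_snoc_eq hc hg2]⟩
            · exact Or.inl ⟨hb, hc⟩
          cases b
          · exact hF hbP
          · exact hT hbP
        · right
          refine ⟨h, ?_, rfl⟩
          by_contra hhS
          obtain ⟨b, hb⟩ := exists_snoc_mem_treeR hh hhS
          have hbP : (gbar ++ h) ++ [b] ∈ ((treeR S₁ \ {w | gbar <+: w}) ∪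
              (fun h => gbar ++ h) '' treeR S₂) := Or.inr ⟨h ++ [b], hb, by simp⟩
          cases b
          · exact hF hbP
          · exact hT hbP
      · rintro (⟨hgS, hg2⟩ | ⟨h, hh, rfl⟩)
        · refine ⟨Or.inl ⟨mem_treeR_self hgS, hg2⟩, ?_, ?_⟩ <;>
          · rintro (⟨hin, -⟩ | ⟨h, hh, he⟩)
            · exact snoc_not_mem_treeR h₁.2.1 hgS _ hin
            · simp only at he
              have hc : gbar <+: g ++ [_] := he ▸ List.prefix_append gbar h
              have := prefix_snoc_eq hc hg2
              exact snoc_not_mem_treeR h₁.2.1 hgS _ (this ▸ hg)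
        · refine ⟨Or.inr ⟨h, mem_treeR_self hh, rfl⟩, ?_, ?_⟩ <;>
          · rintro (⟨-, hnb⟩ | ⟨h', hh', he⟩)
            · exact hnb (by rw [List.append_assoc]; exact List.prefix_append _ _)
            · simp only at he
              rw [List.append_assoc] at he
              have hhe : h' = h ++ [_] := List.append_cancel_left he
              exact snoc_not_mem_treeR h₂.2.1 hh _ (hhe ▸ hh')
    rw [hbd]
    refine ⟨?_, ?_, ?_⟩
    · exact (h₁.1.subset Set.diff_subset).union (h₂.1.image _)
    · rintro g (⟨hgS, hng⟩ | ⟨a, ha, rfl⟩) k (⟨hkS, hnk⟩ | ⟨c, hc, rfl⟩) hpre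
      · exact h₁.2.1 g hgS k hkS hpre
      · simp only at hpre ⊢
        exfalso
        rcases List.prefix_or_prefix_of_prefix hpre (List.prefix_append gbar c) with h | h
        · obtain ⟨kk, hkk, hgkk⟩ := hg
          have := h₁.2.1 g hgS kk hkk (h.trans hgkk)
          exact hng (this ▸ hgkk)
        · exact hng h
      · exact absurd ((List.prefix_append gbar a).trans hpre) hnk
      · simp only at hpre ⊢
        have := h₂.2.1 a ha c hc ((List.prefix_append_right_inj gbar).mp hpre)
        rw [this]
    · intro w hw
      have hglen : gbar.length ≤ w.length := by
        have := hw (gbar ++ g₂) (Or.inr ⟨g₂, hg₂, rfl⟩)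
        simp at this; omega
      obtain ⟨g, hgS, hcomp⟩ := cpc_comparable h₁ w
      by_cases hc : gbar <+: g
      · have hgw : gbar <+: w := by
          rcases hcomp with h | h
          · exact hc.trans h
          · exact List.prefix_of_prefix_length_le hc h hglen
        obtain ⟨v, rfl⟩ := hgw
        obtain ⟨h', hh'S, hcomp₂⟩ := cpc_comparable h₂ v
        have hlen : h'.length ≤ v.length := by
          have := hw (gbar ++ h') (Or.inr ⟨h', hh'S, rfl⟩)
          simp at this; omega
        have hhv : h' <+: v := prefix_total_eq hcomp₂ hlen
        exact ⟨gbar ++ h', Or.inr ⟨h', hh'S, rfl⟩,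
          (List.prefix_append_right_inj gbar).mpr hhv⟩
      · have hlen : g.length ≤ w.length := hw g (Or.inl ⟨hgS, hc⟩)
        exact ⟨g, Or.inl ⟨hgS, hc⟩, prefix_total_eq hcomp hlen⟩
end

section
/- Let X be a tree shift of finite type over alphabet 𝒜 induced by an allowable set B ⊆ 𝒜^{Δ₁} (with every symbol appearing in B extensible). Suppose (α,β,γ) ∈ B with β ≠ γ and β is CPC-connected to γ in X, i.e., there exist a complete prefix code S and x ∈ X with x_ε = β and x_g = γ for all g ∈ S. Let Y be the tree shift of finite type induced by B' = (B \ {(α,β,γ)}) ∪ {(α,γ,γ)}. Then X is CPC-irreducible if and only if Y is CPC-irreducible. -/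
/-- The tree shift of finite type induced by an allowable set of 1-blocks B. -/
def XB {A : Type} (B : Set (A × A × A)) : Set (List Bool → A) :=
  {t | ∀ g : List Bool, (t g, t (g ++ [true]), t (g ++ [false])) ∈ B}

/-- CPC-irreducibility in terms of symbols. -/
def CPCIrr {A : Type} (X : Set (List Bool → A)) : Prop :=
  ∀ α β : A, ∃ x ∈ X, ∃ S : Set (List Bool), IsCPC S ∧
    x [] = α ∧ ∀ g ∈ S, x g = β

open Classical in
noncomputable def fstep {A : Type} (x : List Bool → A) (d : A × A × A)
    (a : List Bool) (b : Bool) : List Bool :=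
  if (x a, x (a ++ [true]), x (a ++ [false])) = d ∧ b = true then a ++ [false] else a ++ [b]

noncomputable def faddr {A : Type} (x : List Bool → A) (d : A × A × A) (w : List Bool) :
    List Bool :=
  w.foldl (fstep x d) []

section
variable {A : Type} {x : List Bool → A} {d : A × A × A}

lemma faddr_append (w : List Bool) (b : Bool) :
    faddr x d (w ++ [b]) = fstep x d (faddr x d w) b := by
  simp [faddr, List.foldl_append]

lemma fstep_eq (a : List Bool) (b : Bool) : ∃ b', fstep x d a b = a ++ [b'] := by
  unfold fstep; split
  · exact ⟨false, rfl⟩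
  · exact ⟨b, rfl⟩

lemma length_fstep (a : List Bool) (b : Bool) : (fstep x d a b).length = a.length + 1 := by
  obtain ⟨b', hb'⟩ := fstep_eq (x := x) (d := d) a b
  simp [hb']

lemma length_faddr (w : List Bool) : (faddr x d w).length = w.length := by
  induction w using List.reverseRecOn with
  | nil => rfl
  | append_singleton w b ih => rw [faddr_append, length_fstep]; simp [ih]

lemma faddr_prefix {u w : List Bool} (h : u <+: w) : faddr x d u <+: faddr x d w := by
  obtain ⟨v, rfl⟩ := h
  induction v using List.reverseRecOn with
  | nil => simp
  | append_singleton v b ih =>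
      rw [← List.append_assoc, faddr_append]
      obtain ⟨b', hb'⟩ := fstep_eq (x := x) (d := d) (faddr x d (u ++ v)) b
      rw [hb']
      exact ih.trans (List.prefix_append _ _)

end

lemma fwd {A : Type} (B : Set (A × A × A)) (α β γ : A) (h : CPCIrr (XB B)) :
    CPCIrr (XB ((B \ {(α, β, γ)}) ∪ {(α, γ, γ)})) := by
  intro δ ε
  obtain ⟨x, hx, S, ⟨hSfin, hSpc, hScomp⟩, hx0, hxS⟩ := h δ ε
  set d : A × A × A := (α, β, γ) with hd
  obtain ⟨n, hn⟩ : ∃ n, ∀ g ∈ S, g.length ≤ n := by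
    obtain ⟨n, hn⟩ := (hSfin.image List.length).bddAbove
    exact ⟨n, fun g hg => hn (Set.mem_image_of_mem _ hg)⟩
  refine ⟨fun w => x (faddr x d w), ?_, {w | faddr x d w ∈ S}, ⟨?_, ?_, ?_⟩, ?_, ?_⟩
  · -- membership in XB B'
    intro w
    set a := faddr x d w with ha
    by_cases hP : (x a, x (a ++ [true]), x (a ++ [false])) = d
    · have h1 : faddr x d (w ++ [true]) = a ++ [false] := by
        rw [faddr_append, ← ha]; unfold fstep; rw [if_pos ⟨hP, rfl⟩]
      have h2 : faddr x d (w ++ [false]) = a ++ [false] := by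
        rw [faddr_append, ← ha]; unfold fstep; simp
      rw [hd, Prod.ext_iff, Prod.ext_iff] at hP
      simp only [h1, h2]
      right
      simp only [Set.mem_singleton_iff, Prod.ext_iff]
      exact ⟨hP.1, hP.2.2, hP.2.2⟩
    · have h1 : faddr x d (w ++ [true]) = a ++ [true] := by
        rw [faddr_append, ← ha]; unfold fstep
        rw [if_neg (by simp [hP])]
      have h2 : faddr x d (w ++ [false]) = a ++ [false] := by
        rw [faddr_append, ← ha]; unfold fstep; simp
      simp only [h1, h2]
      left
      exact ⟨hx a, by simpa using hP⟩
  · -- finite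
    refine (List.finite_length_le Bool n).subset ?_
    intro w hw
    have := hn _ hw
    simpa [length_faddr] using this
  · -- prefix code
    intro g hg h' hh hpre
    have h1 : faddr x d g = faddr x d h' := hSpc _ hg _ hh (faddr_prefix hpre)
    have h2 : g.length = h'.length := by
      rw [← length_faddr (x := x) (d := d) g, ← length_faddr (x := x) (d := d) h', h1]
    exact hpre.eq_of_length h2
  · -- completeness
    intro w hw
    set w₂ := w ++ List.replicate n false with hw₂
    have hlen2 : n ≤ w₂.length := by simp [hw₂]
    obtain ⟨g, hgS, hgpre⟩ := hScomp (faddr x d w₂)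
      (fun g hg => (hn g hg).trans (by rw [length_faddr]; exact hlen2))
    set u := w₂.take g.length with hu
    have hulen : u.length = g.length := by
      simp [hu]
      exact (hn g hgS).trans hlen2
    have hfu : faddr x d u = g := by
      have h1 : faddr x d u <+: faddr x d w₂ := faddr_prefix (List.take_prefix _ _)
      rw [List.prefix_iff_eq_take.mp h1, List.prefix_iff_eq_take.mp hgpre,
        length_faddr, hulen]
    have huS : u ∈ {w | faddr x d w ∈ S} := by rw [Set.mem_setOf_eq, hfu]; exact hgS
    refine ⟨u, huS, ?_⟩
    have hle : u.length ≤ w.length := hw u huS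
    have : u = w.take u.length := by
      rw [hu, hulen, ← hulen, hw₂, List.take_append_of_le_length (by omega)]
    rw [this]
    exact List.take_prefix _ _
  · simpa [faddr] using hx0
  · intro g hg
    exact hxS _ hg

open Classical in
/-- Backward translation step. -/
noncomputable def bstep {A : Type} (y : List Bool → A) (d : A × A × A) (S₀ : Set (List Bool))
    (s : List Bool ⊕ List Bool × List Bool) (b : Bool) : List Bool ⊕ List Bool × List Bool :=
  Sum.elim
    (fun a => if (y a, y (a ++ [true]), y (a ++ [false])) = d ∧ b = true
      then Sum.inr ([], a ++ [true]) else Sum.inl (a ++ [b]))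
    (fun ga => if ga.1 ++ [b] ∈ S₀ then Sum.inl ga.2 else Sum.inr (ga.1 ++ [b], ga.2)) s

noncomputable def bst {A : Type} (y : List Bool → A) (d : A × A × A) (S₀ : Set (List Bool))
    (w : List Bool) : List Bool ⊕ List Bool × List Bool :=
  w.foldl (bstep y d S₀) (Sum.inl [])

section
variable {A : Type} {y : List Bool → A} {d : A × A × A} {S₀ : Set (List Bool)}

lemma bst_nil : bst y d S₀ [] = Sum.inl [] := rfl

lemma bst_append (w : List Bool) (b : Bool) :
    bst y d S₀ (w ++ [b]) = bstep y d S₀ (bst y d S₀ w) b := by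
  simp [bst, List.foldl_append]

lemma bstep_inl (a : List Bool) (b : Bool) :
    ((y a, y (a ++ [true]), y (a ++ [false])) = d ∧ b = true ∧
        bstep y d S₀ (Sum.inl a) b = Sum.inr ([], a ++ [true])) ∨
      (¬((y a, y (a ++ [true]), y (a ++ [false])) = d ∧ b = true) ∧
        bstep y d S₀ (Sum.inl a) b = Sum.inl (a ++ [b])) := by
  by_cases hP : (y a, y (a ++ [true]), y (a ++ [false])) = d ∧ b = true
  · exact Or.inl ⟨hP.1, hP.2, by simp [bstep, hP]⟩
  · exact Or.inr ⟨hP, by simp [bstep, hP]⟩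

lemma bstep_inr (g a : List Bool) (b : Bool) :
    (g ++ [b] ∈ S₀ ∧ bstep y d S₀ (Sum.inr (g, a)) b = Sum.inl a) ∨
      (g ++ [b] ∉ S₀ ∧ bstep y d S₀ (Sum.inr (g, a)) b = Sum.inr (g ++ [b], a)) := by
  by_cases hP : g ++ [b] ∈ S₀
  · exact Or.inl ⟨hP, by simp [bstep, hP]⟩
  · exact Or.inr ⟨hP, by simp [bstep, hP]⟩

end

lemma bwd {A : Type} (B : Set (A × A × A)) (α β γ : A)
    (hmem : (α, β, γ) ∈ B) (hne : β ≠ γ)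
    (hconn : ∃ x ∈ XB B, ∃ S : Set (List Bool), IsCPC S ∧ x [] = β ∧ ∀ g ∈ S, x g = γ)
    (h : CPCIrr (XB ((B \ {(α, β, γ)}) ∪ {(α, γ, γ)}))) :
    CPCIrr (XB B) := by
  obtain ⟨c, hc, S₀, ⟨hS₀fin, hS₀pc, hS₀comp⟩, hcβ, hcγ⟩ := hconn
  have hnil : ([] : List Bool) ∉ S₀ := fun h0 => hne (by rw [← hcβ, hcγ [] h0])
  obtain ⟨L₀, hL₀⟩ : ∃ n, ∀ g ∈ S₀, g.length ≤ n := by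
    obtain ⟨n, hn⟩ := (hS₀fin.image List.length).bddAbove
    exact ⟨n, fun g hg => hn (Set.mem_image_of_mem _ hg)⟩
  intro δ ε
  obtain ⟨y, hy, T, ⟨hTfin, hTpc, hTcomp⟩, hy0, hyT⟩ := h δ ε
  obtain ⟨LT, hLT⟩ : ∃ n, ∀ g ∈ T, g.length ≤ n := by
    obtain ⟨n, hn⟩ := (hTfin.image List.length).bddAbove
    exact ⟨n, fun g hg => hn (Set.mem_image_of_mem _ hg)⟩
  classical
  set d : A × A × A := (α, γ, γ) with hd
  set st : List Bool → List Bool ⊕ List Bool × List Bool := bst y d S₀ with hstdef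
  set val : List Bool ⊕ List Bool × List Bool → A := Sum.elim y (fun p => c p.1) with hvaldef
  set x : List Bool → A := fun w => val (st w) with hxdef
  -- the invariant carried by `inr` states
  have hinv : ∀ w g a, st w = Sum.inr (g, a) →
      y a = γ ∧ (∀ p, p <+: g → p ∉ S₀) ∧ a ≠ [] := by
    intro w
    induction w using List.reverseRecOn with
    | nil => intro g a hga; rw [hstdef, bst_nil] at hga; exact absurd hga (by simp)
    | append_singleton w b ih =>
      intro g a hga
      rw [hstdef, bst_append, ← hstdef] at hga
      rcases hsw : st w with a' | ⟨g', a'⟩ <;> rw [hsw] at hga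
      · rcases bstep_inl (y := y) (d := d) (S₀ := S₀) a' b with ⟨hP, -, he⟩ | ⟨-, he⟩ <;>
          rw [he] at hga
        · obtain ⟨h1, h2⟩ : ([] : List Bool) = g ∧ a' ++ [true] = a := by
            simpa [Prod.ext_iff] using hga
          subst h1; subst h2
          rw [hd, Prod.ext_iff, Prod.ext_iff] at hP
          refine ⟨hP.2.1, ?_, by simp⟩
          intro p hp
          rw [List.prefix_nil.mp hp]; exact hnil
        · exact absurd hga (by simp)
      · rcases bstep_inr (y := y) (d := d) (S₀ := S₀) g' a' b with ⟨-, he⟩ | ⟨hPn, he⟩ <;>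
          rw [he] at hga
        · exact absurd hga (by simp)
        · obtain ⟨h1, h2⟩ : g' ++ [b] = g ∧ a' = a := by simpa [Prod.ext_iff] using hga
          subst h1; subst h2
          obtain ⟨hyγ, hpre, hane⟩ := ih g' a' hsw
          refine ⟨hyγ, ?_, hane⟩
          intro p hp
          rcases List.prefix_concat_iff.mp hp with rfl | hp'
          · exact hPn
          · exact hpre p hp'
  have hst0 : st [] = Sum.inl [] := rfl
  have hstapp : ∀ w b, st (w ++ [b]) = bstep y d S₀ (st w) b := fun w b => by
    rw [hstdef]; exact bst_append w b
  have hglen : ∀ w g a, st w = Sum.inr (g, a) → g.length < L₀ := by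
    intro w g a hw
    by_contra hge
    push_neg at hge
    obtain ⟨p, hpS, hppre⟩ := hS₀comp g (fun q hq => (hL₀ q hq).trans hge)
    exact (hinv w g a hw).2.1 p hppre hpS
  -- membership of the constructed tree in `XB B`
  have hxX : x ∈ XB B := by
    intro w
    show (val (st w), val (st (w ++ [true])), val (st (w ++ [false]))) ∈ B
    rcases hsw : st w with a | ⟨g, a⟩
    · by_cases hP : (y a, y (a ++ [true]), y (a ++ [false])) = d
      · have h1 : st (w ++ [true]) = Sum.inr ([], a ++ [true]) := by
          rw [hstapp, hsw]; simp [bstep, hP]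
        have h2 : st (w ++ [false]) = Sum.inl (a ++ [false]) := by
          rw [hstapp, hsw]; simp [bstep]
        rw [hd] at hP
        rw [h1, h2]
        show (y a, c [], y (a ++ [false])) ∈ B
        rw [show y a = α from congrArg Prod.fst hP, hcβ,
          show y (a ++ [false]) = γ from congrArg (fun q => q.2.2) hP]
        exact hmem
      · have h1 : st (w ++ [true]) = Sum.inl (a ++ [true]) := by
          rw [hstapp, hsw]; simp [bstep, hP]
        have h2 : st (w ++ [false]) = Sum.inl (a ++ [false]) := by
          rw [hstapp, hsw]; simp [bstep]
        rw [h1, h2]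
        show (y a, y (a ++ [true]), y (a ++ [false])) ∈ B
        rcases hy a with hb | hb
        · exact hb.1
        · exact absurd (by simpa using hb) hP
    · obtain ⟨hyγ, -, -⟩ := hinv w g a hsw
      have hv : ∀ b : Bool, val (st (w ++ [b])) = c (g ++ [b]) := by
        intro b
        rcases bstep_inr (y := y) (d := d) (S₀ := S₀) g a b with ⟨hb, he⟩ | ⟨hb, he⟩ <;>
          rw [hstapp, hsw, he] <;> simp only [hvaldef, Sum.elim_inl, Sum.elim_inr]
        rw [hyγ, hcγ _ hb]
      rw [hv true, hv false]
      show (c g, c (g ++ [true]), c (g ++ [false])) ∈ B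
      exact hc g
  -- the projection to the simulated Y-address
  set pr : List Bool ⊕ List Bool × List Bool → List Bool := Sum.elim id Prod.snd with hprdef
  have hmono1 : ∀ s b, pr s <+: pr (bstep y d S₀ s b) := by
    intro s b
    rcases s with a | ⟨g, a⟩
    · rcases bstep_inl (y := y) (d := d) (S₀ := S₀) a b with ⟨-, -, he⟩ | ⟨-, he⟩ <;>
        rw [he] <;> simp only [hprdef, Sum.elim_inl, Sum.elim_inr, id_eq] <;>
        exact List.prefix_append _ _
    · rcases bstep_inr (y := y) (d := d) (S₀ := S₀) g a b with ⟨-, he⟩ | ⟨-, he⟩ <;>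
        rw [he] <;> simp [hprdef]
  have hmono : ∀ u v, pr (st u) <+: pr (st (u ++ v)) := by
    intro u v
    induction v using List.reverseRecOn with
    | nil => simp
    | append_singleton v b ih =>
        rw [← List.append_assoc, hstapp]
        exact ih.trans (hmono1 _ b)
  have hgrow : ∀ a b, (pr (bstep y d S₀ (Sum.inl a) b)).length = a.length + 1 := by
    intro a b
    rcases bstep_inl (y := y) (d := d) (S₀ := S₀) a b with ⟨-, -, he⟩ | ⟨-, he⟩ <;>
      rw [he] <;> simp [hprdef]
  -- the set of leaves of the constructed tree
  set T' : Set (List Bool) := {w | ∃ a, st w = Sum.inl a ∧ a ∈ T} with hT'def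
  have hpcT' : IsPrefixCode T' := by
    rintro w₁ ⟨a₁, h₁, ha₁⟩ w₂ ⟨a₂, h₂, ha₂⟩ hpre
    obtain ⟨v, rfl⟩ := hpre
    have hpp : a₁ <+: a₂ := by
      have h3 := hmono w₁ v
      rw [h₁, h₂] at h3
      simpa [hprdef] using h3
    have he : a₁ = a₂ := hTpc _ ha₁ _ ha₂ hpp
    rcases v with _ | ⟨b, v'⟩
    · simp
    · exfalso
      have h3 : (pr (st (w₁ ++ [b]))).length = a₁.length + 1 := by
        rw [hstapp, h₁]; exact hgrow a₁ b
      have h4 := hmono (w₁ ++ [b]) v'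
      rw [show (w₁ ++ [b]) ++ v' = w₁ ++ (b :: v') by simp, h₂] at h4
      have h5 := h4.length_le
      rw [h3] at h5
      simp only [hprdef, Sum.elim_inl, id_eq] at h5
      rw [← he] at h5
      omega
  -- every strictly-shorter prefix of the current address was visited as an `inl` state
  have hreal : ∀ w p, p <+: pr (st w) → p.length < (pr (st w)).length →
      ∃ u, u <+: w ∧ st u = Sum.inl p := by
    intro w
    induction w using List.reverseRecOn with
    | nil =>
      intro p hp hlt
      rw [hst0] at hlt
      simp [hprdef] at hlt
    | append_singleton w b ih =>
      intro p hp hlt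
      rcases hsw : st w with a | ⟨g, a⟩
      · obtain ⟨c', hprw⟩ : ∃ c', pr (st (w ++ [b])) = a ++ [c'] := by
          rcases bstep_inl (y := y) (d := d) (S₀ := S₀) a b with ⟨-, -, he⟩ | ⟨-, he⟩
          · exact ⟨true, by rw [hstapp, hsw, he]; simp [hprdef]⟩
          · exact ⟨b, by rw [hstapp, hsw, he]; simp [hprdef]⟩
        rw [hprw] at hp hlt
        have hlt' : p.length ≤ a.length := by simp at hlt; omega
        have hpa : p <+: a := by
          have h6 := List.prefix_iff_eq_take.mp hp
          rw [List.take_append_of_le_length hlt'] at h6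
          rw [h6]; exact List.take_prefix _ _
        rcases eq_or_lt_of_le hlt' with heq | hlt'' 
        · exact ⟨w, List.prefix_append _ _, by rw [hsw, hpa.eq_of_length heq]⟩
        · obtain ⟨u, hu1, hu2⟩ := ih p (by rw [hsw]; simpa [hprdef] using hpa)
            (by rw [hsw]; simpa [hprdef] using hlt'')
          exact ⟨u, hu1.trans (List.prefix_append _ _), hu2⟩
      · have hpra : pr (st (w ++ [b])) = a := by
          rcases bstep_inr (y := y) (d := d) (S₀ := S₀) g a b with ⟨-, he⟩ | ⟨-, he⟩ <;>
            rw [hstapp, hsw, he] <;> simp [hprdef]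
        rw [hpra] at hp hlt
        obtain ⟨u, hu1, hu2⟩ := ih p (by rw [hsw]; simpa [hprdef] using hp)
          (by rw [hsw]; simpa [hprdef] using hlt)
        exact ⟨u, hu1.trans (List.prefix_append _ _), hu2⟩
  -- escape from an inserted copy of the connecting tree
  have hexitB : ∀ z g a u, st u = Sum.inr (g, a) → (∃ v, v <+: z ∧ g ++ v ∈ S₀) →
      ∃ v, v <+: z ∧ v ≠ [] ∧ st (u ++ v) = Sum.inl a := by
    intro z
    induction z with
    | nil =>
      rintro g a u hu ⟨v, hv, hvS⟩
      rw [List.prefix_nil.mp hv] at hvS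
      exact absurd (by simpa using hvS) ((hinv u g a hu).2.1 g List.prefix_rfl)
    | cons b z ih =>
      rintro g a u hu ⟨v, hv, hvS⟩
      rcases bstep_inr (y := y) (d := d) (S₀ := S₀) g a b with ⟨hb, he⟩ | ⟨hb, he⟩
      · exact ⟨[b], ⟨z, rfl⟩, by simp, by rw [hstapp, hu, he]⟩
      · have hu' : st (u ++ [b]) = Sum.inr (g ++ [b], a) := by rw [hstapp, hu, he]
        obtain ⟨v', hv', hvS'⟩ : ∃ v', v' <+: z ∧ (g ++ [b]) ++ v' ∈ S₀ := by
          rcases v with _ | ⟨b₂, v₂⟩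
          · exact absurd (by simpa using hvS) ((hinv u g a hu).2.1 g List.prefix_rfl)
          · obtain ⟨rfl, hv₂⟩ := List.cons_prefix_cons.mp hv
            refine ⟨v₂, hv₂, ?_⟩
            rw [List.append_cons] at hvS
            exact hvS
        obtain ⟨v₂, hv₂, hne₂, hst₂⟩ := ih (g ++ [b]) a (u ++ [b]) hu' ⟨v', hv', hvS'⟩
        refine ⟨b :: v₂, List.cons_prefix_cons.mpr ⟨rfl, hv₂⟩, by simp, ?_⟩
        rw [show u ++ (b :: v₂) = (u ++ [b]) ++ v₂ by simp]
        exact hst₂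
  -- one full step: the simulated address grows by one
  have hstepE : ∀ u a z, st u = Sum.inl a → L₀ + 1 ≤ z.length →
      ∃ v b', v <+: z ∧ v.length ≤ L₀ + 1 ∧ st (u ++ v) = Sum.inl (a ++ [b']) := by
    intro u a z hu hz
    rcases z with _ | ⟨b, z'⟩
    · simp at hz
    rcases bstep_inl (y := y) (d := d) (S₀ := S₀) a b with ⟨-, -, he⟩ | ⟨-, he⟩
    · have hu' : st (u ++ [b]) = Sum.inr ([], a ++ [true]) := by rw [hstapp, hu, he]
      have hz' : L₀ ≤ z'.length := by
        have := hz; simp only [List.length_cons] at this; omega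
      have hz₀len : (z'.take L₀).length = L₀ := by
        rw [List.length_take]; omega
      obtain ⟨p, hpS, hpz⟩ := hS₀comp (z'.take L₀) (fun q hq => (hL₀ q hq).trans hz₀len.ge)
      obtain ⟨v, hvp, hvne, hst₂⟩ := hexitB (z'.take L₀) [] (a ++ [true]) (u ++ [b]) hu'
        ⟨p, hpz, by simpa using hpS⟩
      refine ⟨b :: v, true, List.cons_prefix_cons.mpr ⟨rfl, hvp.trans (List.take_prefix _ _)⟩,
        ?_, ?_⟩
      · have h6 := hvp.length_le
        rw [hz₀len] at h6
        simp only [List.length_cons]; omega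
      · rw [show u ++ (b :: v) = (u ++ [b]) ++ v by simp]
        exact hst₂
    · exact ⟨[b], b, ⟨z', rfl⟩, by simp, by rw [hstapp, hu, he]⟩
  -- iterating the step
  have hiter : ∀ i u a z, st u = Sum.inl a → (L₀ + 1) * i ≤ z.length →
      ∃ v a', v <+: z ∧ st (u ++ v) = Sum.inl a' ∧ a'.length = a.length + i := by
    intro i
    induction i with
    | zero => intro u a z hu _; exact ⟨[], a, List.nil_prefix, by simpa using hu, by simp⟩
    | succ i ih =>
      intro u a z hu hz
      have hmul : (L₀ + 1) * (i + 1) = (L₀ + 1) * i + (L₀ + 1) := by ring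
      rw [hmul] at hz
      obtain ⟨v, b', hv, hvlen, hst'⟩ := hstepE u a z hu (le_trans (by omega) hz)
      obtain ⟨v₂, a', hv₂, hst₂, hlen₂⟩ := ih (u ++ v) (a ++ [b']) (z.drop v.length) hst'
        (by
          rw [List.length_drop]
          exact Nat.le_sub_of_add_le (le_trans (Nat.add_le_add_left hvlen _) hz))
      refine ⟨v ++ v₂, a', ?_, ?_, ?_⟩
      · obtain ⟨r, hr⟩ := hv
        have hdr : z.drop v.length = r := by rw [← hr]; simp
        rw [hdr] at hv₂
        obtain ⟨r₂, hr₂⟩ := hv₂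
        exact ⟨r₂, by rw [List.append_assoc, hr₂, hr]⟩
      · rw [← List.append_assoc]; exact hst₂
      · rw [hlen₂]; simp only [List.length_append, List.length_cons, List.length_nil]; omega
  -- length bound on the constructed addresses
  have hbound : ∀ w, (∀ a, st w = Sum.inl a → w.length ≤ (L₀ + 1) * a.length) ∧
      (∀ g a, st w = Sum.inr (g, a) → w.length ≤ (L₀ + 1) * (a.length - 1) + 1 + g.length) := by
    intro w
    induction w using List.reverseRecOn with
    | nil =>
      constructor
      · intro a ha
        rw [hst0] at ha
        obtain rfl : ([] : List Bool) = a := by simpa using ha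
        simp
      · intro g a ha; rw [hst0] at ha; exact absurd ha (by simp)
    | append_singleton w b ih =>
      have hse := hstapp w b
      constructor
      · intro a ha
        rcases hsw : st w with a₀ | ⟨g₀, a₀⟩ <;> rw [hsw] at hse
        · rcases bstep_inl (y := y) (d := d) (S₀ := S₀) a₀ b with ⟨-, -, he⟩ | ⟨-, he⟩ <;>
            rw [he] at hse <;> rw [hse] at ha
          · exact absurd ha (by simp)
          · obtain rfl : a₀ ++ [b] = a := by simpa using ha
            have h1 := ih.1 a₀ hsw
            have h2 : (L₀ + 1) * (a₀.length + 1) = (L₀ + 1) * a₀.length + (L₀ + 1) := by ring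
            have h3 : (w ++ [b]).length = w.length + 1 := by simp
            have h4 : (a₀ ++ [b]).length = a₀.length + 1 := by simp
            rw [h3, h4, h2]
            linarith
        · rcases bstep_inr (y := y) (d := d) (S₀ := S₀) g₀ a₀ b with ⟨-, he⟩ | ⟨-, he⟩ <;>
            rw [he] at hse <;> rw [hse] at ha
          · obtain rfl : a₀ = a := by simpa using ha
            have h1 := ih.2 g₀ a₀ hsw
            have hg := hglen w g₀ a₀ hsw
            have hane := (hinv w g₀ a₀ hsw).2.2
            obtain ⟨m, hm⟩ : ∃ m, a₀.length = m + 1 :=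
              ⟨a₀.length - 1, by have := List.length_pos_iff.mpr hane; omega⟩
            rw [hm, Nat.add_sub_cancel] at h1
            have h2 : (L₀ + 1) * (m + 1) = (L₀ + 1) * m + L₀ + 1 := by ring
            have h3 : (w ++ [b]).length = w.length + 1 := by simp
            rw [h3, hm, h2]
            linarith
          · exact absurd ha (by simp)
      · intro g a ha
        rcases hsw : st w with a₀ | ⟨g₀, a₀⟩ <;> rw [hsw] at hse
        · rcases bstep_inl (y := y) (d := d) (S₀ := S₀) a₀ b with ⟨-, -, he⟩ | ⟨-, he⟩ <;>
            rw [he] at hse <;> rw [hse] at ha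
          · obtain ⟨rfl, rfl⟩ : ([] : List Bool) = g ∧ a₀ ++ [true] = a := by
              simpa [Prod.ext_iff] using ha
            have h1 := ih.1 a₀ hsw
            have h3 : (w ++ [b]).length = w.length + 1 := by simp
            have h4 : (a₀ ++ [true]).length - 1 = a₀.length := by simp
            rw [h3, h4]
            simp only [List.length_nil]
            linarith
          · exact absurd ha (by simp)
        · rcases bstep_inr (y := y) (d := d) (S₀ := S₀) g₀ a₀ b with ⟨-, he⟩ | ⟨-, he⟩ <;>
            rw [he] at hse <;> rw [hse] at ha
          · exact absurd ha (by simp)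
          · obtain ⟨rfl, rfl⟩ : g₀ ++ [b] = g ∧ a₀ = a := by simpa [Prod.ext_iff] using ha
            have h1 := ih.2 g₀ a₀ hsw
            have h3 : (w ++ [b]).length = w.length + 1 := by simp
            have h4 : (g₀ ++ [b]).length = g₀.length + 1 := by simp
            rw [h3, h4]
            linarith
  -- assemble
  refine ⟨x, hxX, T', ⟨?_, hpcT', ?_⟩, ?_, ?_⟩
  · refine (List.finite_length_le Bool ((L₀ + 1) * LT)).subset ?_
    rintro w ⟨a, hwa, haT⟩
    have h1 := (hbound w).1 a hwa
    have h2 : a.length ≤ LT := hLT a haT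
    simp only [Set.mem_setOf_eq]
    exact h1.trans (Nat.mul_le_mul_left _ h2)
  · intro w hw
    set w₂ := w ++ List.replicate ((L₀ + 1) * LT) false with hw₂
    have hlen2 : (L₀ + 1) * LT ≤ w₂.length := by simp [hw₂]
    obtain ⟨v, a', hv, hstv, hlen'⟩ := hiter LT [] [] w₂ hst0 hlen2
    rw [List.nil_append] at hstv
    have hlen'' : a'.length = LT := by simpa using hlen'
    obtain ⟨p, hpT, hppre⟩ := hTcomp a' (fun q hq => (hLT q hq).trans hlen''.ge)
    have hple : p.length ≤ a'.length := hppre.length_le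
    obtain ⟨u, huv, hstu⟩ : ∃ u, u <+: v ∧ st u = Sum.inl p := by
      rcases eq_or_lt_of_le hple with heq | hlt
      · exact ⟨v, List.prefix_rfl, by rw [hstv, hppre.eq_of_length heq]⟩
      · obtain ⟨u, hu1, hu2⟩ := hreal v p (by rw [hstv]; simpa [hprdef] using hppre)
          (by rw [hstv]; simpa [hprdef] using hlt)
        exact ⟨u, hu1, hu2⟩
    have huT' : u ∈ T' := ⟨p, hstu, hpT⟩
    have hule : u.length ≤ w.length := hw u huT'
    have huw₂ : u <+: w₂ := huv.trans hv
    refine ⟨u, huT', ?_⟩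
    have h6 := List.prefix_iff_eq_take.mp huw₂
    rw [hw₂, List.take_append_of_le_length hule] at h6
    rw [h6]
    exact List.take_prefix _ _
  · show val (st []) = δ
    rw [hst0]
    simpa [hvaldef] using hy0
  · rintro g ⟨a, hga, haT⟩
    show val (st g) = ε
    rw [hga]
    simpa [hvaldef] using hyT a haT

/-- Replacing a divergent block (α,β,γ) by the convergent block (α,γ,γ) preserves
CPC-irreducibility, provided β is CPC-connected to γ. -/
theorem stmt8 {A : Type} [Fintype A] (B : Set (A × A × A))
    (hext : ∀ p ∈ B, ∀ δ ∈ ({p.1, p.2.1, p.2.2} : Set A), ∃ β γ, (δ, β, γ) ∈ B)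
    (α β γ : A) (hmem : (α, β, γ) ∈ B) (hne : β ≠ γ)
    (hconn : ∃ x ∈ XB B, ∃ S : Set (List Bool), IsCPC S ∧
      x [] = β ∧ ∀ g ∈ S, x g = γ) :
    CPCIrr (XB B) ↔ CPCIrr (XB ((B \ {(α, β, γ)}) ∪ {(α, γ, γ)})) := by
  constructor
  · intro hX
    exact fwd B α β γ hX
  · intro hY
    exact bwd B α β γ hmem hne hconn hY
end

section
/- Let 𝒢 = (V, E_c, E_d) be an extended directed graph whose induced tree shift X_𝒢 has all symbols extensible, and suppose 𝒢 is (d,c)-irreducible and the intrinsic directed graph 𝒢^c = (V, E_c) is strongly connected. Then X_𝒢 is CPC-irreducible. -/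
/-- The tree shift induced by an extended directed graph (V, Ec, Ed). -/
def XG {V : Type} (Ec : Set (V × V)) (Ed : Set (V × V × V)) :
    Set (List Bool → V) :=
  {t | ∀ g : List Bool,
    (t (g ++ [true]) = t (g ++ [false]) ∧ (t g, t (g ++ [true])) ∈ Ec) ∨
    (t (g ++ [true]) ≠ t (g ++ [false]) ∧
      (t g, t (g ++ [true]), t (g ++ [false])) ∈ Ed)}

/-- The edge relation of the intrinsic graph 𝒢^c. -/
def cEdge {V : Type} (Ec : Set (V × V)) : V → V → Prop :=
  fun a b => (a, b) ∈ Ec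

/-- (d,c)-reducibility of an extended directed graph. -/
def dcReducible {V : Type} (Ec : Set (V × V)) (Ed : Set (V × V × V)) : Prop :=
  ∃ p ∈ Ed,
    (Relation.ReflTransGen (cEdge Ec) p.2.1 p.2.2 ∧ (p.1, p.2.2) ∉ Ec) ∨
    (Relation.ReflTransGen (cEdge Ec) p.2.2 p.2.1 ∧ (p.1, p.2.1) ∉ Ec)

/-- Strong connectivity of a directed graph. -/
def StronglyConnected {V : Type} (Ec : Set (V × V)) : Prop :=
  ∀ a b : V, Relation.ReflTransGen (cEdge Ec) a b

/-- Every symbol of X_𝒢 is extensible: each vertex has allowable children. -/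
def Extensible {V : Type} (Ec : Set (V × V)) (Ed : Set (V × V × V)) : Prop :=
  ∀ v : V, (∃ w, (v, w) ∈ Ec) ∨ (∃ w₁ w₂, (v, w₁, w₂) ∈ Ed)

/-- If 𝒢 is (d,c)-irreducible with strongly connected intrinsic graph, then
X_𝒢 is CPC-irreducible. -/
theorem stmt10 {V : Type} [Fintype V] (Ec : Set (V × V)) (Ed : Set (V × V × V))
    (hEd : ∀ p ∈ Ed, p.2.1 ≠ p.2.2)
    (hext : Extensible Ec Ed)
    (hirr : ¬ dcReducible Ec Ed)
    (hsc : StronglyConnected Ec) :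
    CPCIrr (XG Ec Ed) := by

  intro α β
  have hσ : ∀ v : V, ∃ w, (v, w) ∈ Ec := by
    intro v
    by_cases h : ∃ u : V, u ≠ v
    · obtain ⟨u, hu⟩ := h
      rcases (hsc v u).cases_head with h | ⟨c, hc, _⟩
      · exact absurd h.symm hu
      · exact ⟨c, hc⟩
    · push_neg at h
      rcases hext v with ⟨w, hw⟩ | ⟨w₁, w₂, hw⟩
      · exact ⟨w, hw⟩
      · exact absurd ((h w₁).trans (h w₂).symm) (hEd _ hw)
  choose σ hσ using hσ
  have key : ∀ a b : V, Relation.ReflTransGen (cEdge Ec) a b →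
      ∃ n : ℕ, ∃ F : ℕ → V, F 0 = a ∧ F n = b ∧ ∀ i, (F i, F (i + 1)) ∈ Ec := by
    intro a b h
    induction h with
    | refl =>
      refine ⟨0, fun i => σ^[i] a, rfl, rfl, fun i => ?_⟩
      show (σ^[i] a, σ^[i + 1] a) ∈ Ec
      rw [Function.iterate_succ_apply']
      exact hσ _
    | @tail b c h e ih =>
      obtain ⟨n, F, h0, hn, hE⟩ := ih
      refine ⟨n + 1, fun i => if i ≤ n then F i else σ^[i - (n + 1)] c, ?_, ?_, ?_⟩
      · simp [h0]
      · simp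
      · intro i
        rcases lt_trichotomy i n with hi | hi | hi
        · simp only [if_pos hi.le, if_pos (by omega : i + 1 ≤ n)]
          exact hE i
        · subst hi
          simp only [if_pos le_rfl, if_neg (by omega : ¬ i + 1 ≤ i), Nat.sub_self,
            Function.iterate_zero_apply, hn]
          exact e
        · simp only [if_neg (by omega : ¬ i ≤ n), if_neg (by omega : ¬ i + 1 ≤ n)]
          have h2 : i + 1 - (n + 1) = (i - (n + 1)) + 1 := by omega
          rw [h2, Function.iterate_succ_apply']
          exact hσ _
  obtain ⟨n, F, h0, hn, hE⟩ := key α β (hsc α β)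
  refine ⟨fun g => F g.length, ?_, {w | w.length = n}, ⟨?_, ?_, ?_⟩, ?_, ?_⟩
  · intro g
    left
    refine ⟨by simp, ?_⟩
    simpa using hE g.length
  · exact List.finite_length_eq Bool n
  · intro g hg h hh hgh
    exact hgh.eq_of_length (hg.trans hh.symm)
  · intro w hw
    have hnw : n ≤ w.length := by simpa using hw (List.replicate n true) (by simp)
    exact ⟨w.take n, by simp [Set.mem_setOf_eq, hnw], List.take_prefix n w⟩
  · simpa using h0
  · intro g hg
    simp only [Set.mem_setOf_eq] at hg
    show F g.length = β
    rw [hg, hn]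
end

section
/- Let 𝒢 = (V, E_c, E_d) be a (d,c)-irreducible extended directed graph whose induced tree shift X_𝒢 has all symbols extensible. If X_𝒢 is CPC-irreducible, then the intrinsic graph 𝒢^c = (V, E_c) is strongly connected. -/
/-- If a word is in `treeR S` but not in `S`, both its one-letter extensions
are still in `treeR S` (by completeness of the prefix code `S`). -/
lemma treeR_child {S : Set (List Bool)} (hS : IsCPC S) {N : ℕ}
    (hN : ∀ h ∈ S, h.length ≤ N)
    {g : List Bool} (hg : g ∈ treeR S) (hgS : g ∉ S) (s : Bool) :
    g ++ [s] ∈ treeR S := by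
  obtain ⟨h, hhS, hgh⟩ := hg
  obtain ⟨p, hpS, hpw⟩ := hS.2.2 ((g ++ [s]) ++ List.replicate N true) (by
    intro q hq
    have := hN q hq
    simp only [List.length_append, List.length_replicate]
    omega)
  rcases List.prefix_or_prefix_of_prefix (List.prefix_append (g ++ [s]) _) hpw with
    hle | hle
  · exact ⟨p, hpS, hle⟩
  · -- p <+: g ++ [s]
    by_cases hlen : p.length ≤ g.length
    · -- then p <+: g, so p <+: h, so p = h by the prefix code property,
      -- whence g = h ∈ S, contradiction
      have hpg : p <+: g :=
        List.prefix_of_prefix_length_le hle (List.prefix_append g [s]) hlen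
      have hph : p = h := hS.2.1 p hpS h hhS (hpg.trans hgh)
      have hgp : g = p := by
        have h1 : g <+: p := hph ▸ hgh
        exact (List.IsPrefix.eq_of_length h1
          (le_antisymm h1.length_le hpg.length_le)).symm ▸ rfl
      exact absurd (hgp ▸ hpS) hgS
    · -- p = g ++ [s]
      have : p = g ++ [s] := by
        apply List.IsPrefix.eq_of_length hle
        have := hle.length_le
        simp only [List.length_append, List.length_cons, List.length_nil] at *
        omega
      exact ⟨p, hpS, this ▸ List.prefix_refl _⟩

/-- If 𝒢 is (d,c)-irreducible and X_𝒢 is CPC-irreducible, then the intrinsic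
graph 𝒢^c is strongly connected. -/
theorem stmt11 {V : Type} [Fintype V] (Ec : Set (V × V)) (Ed : Set (V × V × V))
    (hEd : ∀ p ∈ Ed, p.2.1 ≠ p.2.2)
    (hext : Extensible Ec Ed)
    (hirr : ¬ dcReducible Ec Ed)
    (hcpc : CPCIrr (XG Ec Ed)) :
    StronglyConnected Ec := by
  classical
  set R : V → V → Prop := Relation.ReflTransGen (cEdge Ec) with hR
  suffices H : ∀ n : ℕ, ∀ b : V, ({v | R v b}).ncard ≤ n → ∀ a : V, R a b by
    intro a b
    exact H _ b le_rfl a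
  intro n
  induction n with
  | zero =>
    intro b hb a
    exfalso
    have hbmem : b ∈ {v | R v b} := Relation.ReflTransGen.refl
    have : ({v | R v b}).ncard = 0 := Nat.le_zero.mp hb
    rw [Set.ncard_eq_zero (Set.toFinite _)] at this
    rw [this] at hbmem
    exact hbmem
  | succ n ih =>
    intro b hb a
    by_contra hab
    obtain ⟨x, hx, S, hS, hroot, hbd⟩ := hcpc a b
    -- a bound on the lengths of elements of S
    set N : ℕ := hS.1.toFinset.sup List.length with hNdef
    have hN : ∀ h ∈ S, h.length ≤ N := by
      intro h hh
      exact Finset.le_sup (f := List.length) (hS.1.mem_toFinset.mpr hh)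
    -- key descent lemma
    have key : ∀ k : ℕ, ∀ g : List Bool, g ∈ treeR S → N < g.length + k →
        ¬ R (x g) b → False := by
      intro k
      induction k with
      | zero =>
        intro g hg hlen _
        obtain ⟨h, hhS, hgh⟩ := hg
        have := hgh.length_le
        have := hN h hhS
        omega
      | succ k ihk =>
        intro g hg hlen hnr
        by_cases hgS : g ∈ S
        · exact hnr (hbd g hgS ▸ Relation.ReflTransGen.refl)
        · have hchild : ∀ s : Bool, g ++ [s] ∈ treeR S :=
            fun s => treeR_child hS hN hg hgS s
          have hlen' : ∀ s : Bool, N < (g ++ [s]).length + k := by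
            intro s
            simp only [List.length_append, List.length_cons, List.length_nil]
            omega
          rcases hx g with ⟨heq, hc⟩ | ⟨hne, hd⟩
          · -- c-edge
            have hch : ¬ R (x (g ++ [true])) b := by
              intro hreach
              exact hnr (Relation.ReflTransGen.head hc hreach)
            exact ihk (g ++ [true]) (hchild true) (hlen' true) hch
          · -- d-edge
            by_cases h1 : R (x (g ++ [true])) b
            · by_cases h2 : R (x (g ++ [false])) b
              · -- both children reach b; use irreducibility and the IH
                have hc1 : (x g, x (g ++ [true])) ∉ Ec := by
                  intro hmem
                  exact hnr (Relation.ReflTransGen.head hmem h1)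
                have hc2 : (x g, x (g ++ [false])) ∉ Ec := by
                  intro hmem
                  exact hnr (Relation.ReflTransGen.head hmem h2)
                have hnr12 : ¬ R (x (g ++ [true])) (x (g ++ [false])) := by
                  intro hr
                  exact hirr ⟨(x g, x (g ++ [true]), x (g ++ [false])), hd,
                    Or.inl ⟨hr, hc2⟩⟩
                -- {v | R v β₂} ⊊ {v | R v b}
                have hsub : {v | R v (x (g ++ [false]))} ⊆ {v | R v b} :=
                  fun v hv => hv.trans h2
                have hss : {v | R v (x (g ++ [false]))} ⊂ {v | R v b} :=
                  (Set.ssubset_iff_of_subset hsub).mpr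
                    ⟨x (g ++ [true]), h1, hnr12⟩
                have hlt : ({v | R v (x (g ++ [false]))}).ncard <
                    ({v | R v b}).ncard :=
                  Set.ncard_lt_ncard hss (Set.toFinite _)
                exact hnr12 (ih (x (g ++ [false])) (by omega) (x (g ++ [true])))
              · exact ihk (g ++ [false]) (hchild false) (hlen' false) h2
            · exact ihk (g ++ [true]) (hchild true) (hlen' true) h1
    -- S is nonempty, so [] ∈ treeR S
    obtain ⟨h0, hh0S, _⟩ := hS.2.2 (List.replicate N true) (by
      intro q hq
      simpa using hN q hq)
    have hroot_mem : ([] : List Bool) ∈ treeR S := ⟨h0, hh0S, List.nil_prefix⟩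
    exact key (N + 1) [] hroot_mem (by simp) (hroot ▸ hab)
end

section
/- Let 𝒢 = (V, E_c, E_d) be an extended directed graph with all symbols of X_𝒢 extensible, and suppose ℋ = (V, E_c ∪ {(α,γ)}, E_d) is a (d,c)-reduction of 𝒢, i.e., (α,β,γ) ∈ E_d, there is a directed path in 𝒢^c = (V,E_c) from β to γ, and (α,γ) ∉ E_c. Then X_𝒢 is CPC-irreducible if and only if X_ℋ is CPC-irreducible. -/
/-! ### Auxiliary development -/

/-- Reachability-to-CPC predicate: `Good Ec Ed b a` holds iff there is a finite
pattern with root `a` whose boundary (a CPC) is constantly `b`. -/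
inductive Good {V : Type} (Ec : Set (V × V)) (Ed : Set (V × V × V)) (b : V) : V → Prop
  | refl : Good Ec Ed b b
  | conv {a w : V} : (a, w) ∈ Ec → Good Ec Ed b w → Good Ec Ed b a
  | div {a w₁ w₂ : V} : (a, w₁, w₂) ∈ Ed → Good Ec Ed b w₁ → Good Ec Ed b w₂ →
      Good Ec Ed b a

lemma cpc_bound {S : Set (List Bool)} (h : IsCPC S) : ∃ N, ∀ g ∈ S, g.length ≤ N := by
  obtain ⟨hfin, -, -⟩ := h
  have : (List.length '' S).Finite := hfin.image _
  obtain ⟨N, hN⟩ := this.bddAbove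
  exact ⟨N, fun g hg => hN ⟨g, hg, rfl⟩⟩

lemma prefix_of_prefix_append {l w z : List Bool} (h : l <+: w ++ z)
    (hl : l.length ≤ w.length) : l <+: w := by
  have h1 : l = (w ++ z).take l.length := by
    obtain ⟨t, ht⟩ := h
    rw [← ht, List.take_left']; rfl
  rw [List.take_append] at h1
  have h2 : l.length - w.length = 0 := by omega
  rw [h2] at h1
  simp at h1
  rw [h1]
  exact List.take_prefix _ _

lemma cpc_child {S : Set (List Bool)} (h : IsCPC S) (hne : [] ∉ S) (c : Bool) :
    IsCPC {g | c :: g ∈ S} := by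
  obtain ⟨N, hN⟩ := cpc_bound h
  refine ⟨?_, ?_, ?_⟩
  · have : {g | c :: g ∈ S} = (fun g => c :: g) ⁻¹' S := rfl
    rw [this]
    exact Set.Finite.preimage (Set.injOn_of_injective (fun a b hab => by
      simpa using hab)) h.1
  · intro g hg g' hg' hp
    have := h.2.1 (c :: g) hg (c :: g') hg' (by
      obtain ⟨t, ht⟩ := hp; exact ⟨t, by rw [← ht]; rfl⟩)
    simpa using this
  · intro w hw
    obtain ⟨g, hg, hp⟩ := h.2.2 (c :: (w ++ List.replicate N c)) (by
      intro g hg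
      have := hN g hg
      simp; omega)
    match g, hg, hp with
    | [], hg, _ => exact absurd hg hne
    | c' :: g', hg, hp =>
      obtain ⟨hc, hp'⟩ := List.cons_prefix_cons.mp hp
      subst hc
      exact ⟨g', hg, prefix_of_prefix_append hp' (hw g' hg)⟩

lemma xg_shift {V : Type} {Ec : Set (V × V)} {Ed : Set (V × V × V)}
    {x : List Bool → V} (hx : x ∈ XG Ec Ed) (c : Bool) :
    (fun g => x (c :: g)) ∈ XG Ec Ed := by
  intro g
  exact hx (c :: g)

lemma good_of_tree {V : Type} {Ec : Set (V × V)} {Ed : Set (V × V × V)} {b : V} :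
    ∀ (N : ℕ) (x : List Bool → V) (S : Set (List Bool)), x ∈ XG Ec Ed → IsCPC S →
      (∀ g ∈ S, g.length ≤ N) → (∀ g ∈ S, x g = b) → Good Ec Ed b (x []) := by
  intro N
  induction N with
  | zero =>
    intro x S hx hS hlen hval
    obtain ⟨g, hg⟩ := cpc_nonempty hS
    have : g = [] := List.length_eq_zero_iff.mp (Nat.le_zero.mp (hlen g hg))
    subst this
    rw [hval [] hg]
    exact Good.refl
  | succ N ih =>
    intro x S hx hS hlen hval
    by_cases hnil : [] ∈ S
    · rw [show x [] = b from hval [] hnil]; exact Good.refl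
    · have hgood : ∀ c : Bool, Good Ec Ed b (x [c]) := by
        intro c
        have := ih (fun g => x (c :: g)) {g | c :: g ∈ S} (xg_shift hx c)
          (cpc_child hS hnil c)
          (fun g hg => by have := hlen _ hg; simpa using this)
          (fun g hg => hval _ hg)
        simpa using this
      rcases hx [] with ⟨heq, hEc⟩ | ⟨hne, hEd⟩
      · exact Good.conv (by simpa using hEc) (by simpa using hgood true)
      · exact Good.div (by simpa using hEd) (by simpa using hgood true)
          (by simpa using hgood false)

section Build
variable {V : Type} {Ec : Set (V × V)} {Ed : Set (V × V × V)}

def blockOK (Ec : Set (V × V)) (Ed : Set (V × V × V)) (v : V) (p : V × V) : Prop :=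
  (p.1 = p.2 ∧ (v, p.1) ∈ Ec) ∨ (p.1 ≠ p.2 ∧ (v, p.1, p.2) ∈ Ed)

lemma exists_block (hEd : ∀ p ∈ Ed, p.2.1 ≠ p.2.2) (hext : Extensible Ec Ed) (v : V) :
    ∃ p, blockOK Ec Ed v p := by
  rcases hext v with ⟨w, hw⟩ | ⟨w₁, w₂, hw⟩
  · exact ⟨(w, w), Or.inl ⟨rfl, hw⟩⟩
  · exact ⟨(w₁, w₂), Or.inr ⟨hEd _ hw, hw⟩⟩

noncomputable def buildRev (ch : V → V × V) (v : V) : List Bool → V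
  | [] => v
  | c :: g => if c then (ch (buildRev ch v g)).1 else (ch (buildRev ch v g)).2

lemma buildRev_mem (ch : V → V × V) (hch : ∀ v, blockOK Ec Ed v (ch v)) (v : V) :
    (fun g => buildRev ch v g.reverse) ∈ XG Ec Ed := by
  intro g
  have h1 : (g ++ [true]).reverse = true :: g.reverse := by simp
  have h2 : (g ++ [false]).reverse = false :: g.reverse := by simp
  simp only [h1, h2, buildRev, if_pos, if_neg]
  rcases hch (buildRev ch v g.reverse) with ⟨heq, hEc⟩ | ⟨hne, hEd'⟩
  · exact Or.inl ⟨by simp [heq], by simpa using hEc⟩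
  · exact Or.inr ⟨by simpa using hne, by simpa using hEd'⟩

end Build

lemma cpc_singleton_nil : IsCPC {([] : List Bool)} := by
  refine ⟨Set.finite_singleton _, ?_, ?_⟩
  · intro g hg h hh _
    simp at hg hh; simp [hg, hh]
  · intro w _
    exact ⟨[], rfl, List.nil_prefix⟩

lemma cpc_union_cons {S₁ S₂ : Set (List Bool)} (h₁ : IsCPC S₁) (h₂ : IsCPC S₂) :
    IsCPC ((List.cons true) '' S₁ ∪ (List.cons false) '' S₂) := by
  refine ⟨(h₁.1.image _).union (h₂.1.image _), ?_, ?_⟩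
  · rintro g (⟨g₁, hg₁, rfl⟩ | ⟨g₁, hg₁, rfl⟩) h (⟨h₁', hh₁, rfl⟩ | ⟨h₁', hh₁, rfl⟩) hp <;>
      obtain ⟨hc, hp'⟩ := List.cons_prefix_cons.mp hp <;>
      first
        | (rw [h₁.2.1 _ hg₁ _ hh₁ hp'])
        | (rw [h₂.2.1 _ hg₁ _ hh₁ hp'])
        | (exact absurd hc (by simp))
  · intro w hw
    obtain ⟨g₁, hg₁⟩ := cpc_nonempty h₁
    match w, hw with
    | [], hw =>
      have := hw (true :: g₁) (Or.inl ⟨g₁, hg₁, rfl⟩)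
      simp at this
    | (true :: w'), hw =>
      obtain ⟨g, hg, hp⟩ := h₁.2.2 w' (fun g hg => by
        have := hw (true :: g) (Or.inl ⟨g, hg, rfl⟩); simpa using this)
      exact ⟨true :: g, Or.inl ⟨g, hg, rfl⟩, List.cons_prefix_cons.mpr ⟨rfl, hp⟩⟩
    | (false :: w'), hw =>
      obtain ⟨g, hg, hp⟩ := h₂.2.2 w' (fun g hg => by
        have := hw (false :: g) (Or.inr ⟨g, hg, rfl⟩); simpa using this)
      exact ⟨false :: g, Or.inr ⟨g, hg, rfl⟩, List.cons_prefix_cons.mpr ⟨rfl, hp⟩⟩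

section Glue
variable {V : Type} {Ec : Set (V × V)} {Ed : Set (V × V × V)}

def glue (a : V) (x₁ x₂ : List Bool → V) : List Bool → V
  | [] => a
  | true :: g => x₁ g
  | false :: g => x₂ g

lemma glue_mem {a : V} {x₁ x₂ : List Bool → V} (hx₁ : x₁ ∈ XG Ec Ed)
    (hx₂ : x₂ ∈ XG Ec Ed) (hroot : blockOK Ec Ed a (x₁ [], x₂ [])) :
    glue a x₁ x₂ ∈ XG Ec Ed := by
  intro g
  match g with
  | [] =>
    rcases hroot with ⟨heq, hEc⟩ | ⟨hne, hEd'⟩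
    · exact Or.inl ⟨heq, hEc⟩
    · exact Or.inr ⟨hne, hEd'⟩
  | true :: g' => exact hx₁ g'
  | false :: g' => exact hx₂ g'

lemma tree_of_good (hEd : ∀ p ∈ Ed, p.2.1 ≠ p.2.2) (hext : Extensible Ec Ed)
    {a b : V} (h : Good Ec Ed b a) :
    ∃ x ∈ XG Ec Ed, ∃ S : Set (List Bool), IsCPC S ∧ x [] = a ∧ ∀ g ∈ S, x g = b := by
  induction h with
  | refl =>
    obtain ⟨ch, hch⟩ := Classical.axiomOfChoice (exists_block hEd hext)
    exact ⟨fun g => buildRev ch b g.reverse, buildRev_mem ch hch b,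
      {[]}, cpc_singleton_nil, rfl, by rintro g rfl; rfl⟩
  | conv hEc _ ih =>
    obtain ⟨x, hx, S, hS, hroot, hval⟩ := ih
    refine ⟨glue _ x x, glue_mem hx hx (Or.inl ⟨rfl, by rw [hroot]; exact hEc⟩),
      (List.cons true) '' S ∪ (List.cons false) '' S, cpc_union_cons hS hS, rfl, ?_⟩
    rintro g (⟨g', hg', rfl⟩ | ⟨g', hg', rfl⟩) <;> exact hval g' hg'
  | div hEd' _ _ ih₁ ih₂ =>
    obtain ⟨x₁, hx₁, S₁, hS₁, hroot₁, hval₁⟩ := ih₁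
    obtain ⟨x₂, hx₂, S₂, hS₂, hroot₂, hval₂⟩ := ih₂
    refine ⟨glue _ x₁ x₂, glue_mem hx₁ hx₂ (Or.inr ⟨by rw [hroot₁, hroot₂]; exact hEd _ hEd',
      by rw [hroot₁, hroot₂]; exact hEd'⟩),
      (List.cons true) '' S₁ ∪ (List.cons false) '' S₂, cpc_union_cons hS₁ hS₂, rfl, ?_⟩
    rintro g (⟨g', hg', rfl⟩ | ⟨g', hg', rfl⟩)
    · exact hval₁ g' hg'
    · exact hval₂ g' hg'

end Glue

lemma cpcIrr_iff_good {V : Type} {Ec : Set (V × V)} {Ed : Set (V × V × V)}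
    (hEd : ∀ p ∈ Ed, p.2.1 ≠ p.2.2) (hext : Extensible Ec Ed) :
    CPCIrr (XG Ec Ed) ↔ ∀ a b : V, Good Ec Ed b a := by
  constructor
  · intro h a b
    obtain ⟨x, hx, S, hS, hroot, hval⟩ := h a b
    obtain ⟨N, hN⟩ := cpc_bound hS
    rw [← hroot]
    exact good_of_tree N x S hx hS hN hval
  · intro h a b
    obtain ⟨x, hx, S, hS, hroot, hval⟩ := tree_of_good hEd hext (h a b)
    exact ⟨x, hx, S, hS, hroot, hval⟩

lemma good_mono {V : Type} {Ec Ec' : Set (V × V)} {Ed : Set (V × V × V)}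
    (hsub : Ec ⊆ Ec') {a b : V} (h : Good Ec Ed b a) : Good Ec' Ed b a := by
  induction h with
  | refl => exact Good.refl
  | conv hEc _ ih => exact Good.conv (hsub hEc) ih
  | div hEd' _ _ ih₁ ih₂ => exact Good.div hEd' ih₁ ih₂

lemma good_of_path {V : Type} {Ec : Set (V × V)} {Ed : Set (V × V × V)} {b u v : V}
    (hp : Relation.ReflTransGen (cEdge Ec) u v) (h : Good Ec Ed b v) :
    Good Ec Ed b u := by
  induction hp using Relation.ReflTransGen.head_induction_on with
  | refl => exact h
  | head hstep _ ih => exact Good.conv hstep ih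

/-- A (d,c)-reduction preserves CPC-irreducibility. -/
theorem stmt12 {V : Type} [Fintype V] (Ec : Set (V × V)) (Ed : Set (V × V × V))
    (hEd : ∀ p ∈ Ed, p.2.1 ≠ p.2.2)
    (hext : Extensible Ec Ed)
    (α β γ : V) (hd : (α, β, γ) ∈ Ed)
    (hpath : Relation.ReflTransGen (cEdge Ec) β γ)
    (hnc : (α, γ) ∉ Ec) :
    CPCIrr (XG Ec Ed) ↔ CPCIrr (XG (Ec ∪ {(α, γ)}) Ed) := by
  have hext' : Extensible (Ec ∪ {(α, γ)}) Ed := by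
    intro v
    rcases hext v with ⟨w, hw⟩ | hdiv
    · exact Or.inl ⟨w, Or.inl hw⟩
    · exact Or.inr hdiv
  rw [cpcIrr_iff_good hEd hext, cpcIrr_iff_good hEd hext']
  constructor
  · intro h a b
    exact good_mono Set.subset_union_left (h a b)
  · intro h a b
    have key : ∀ c : V, Good (Ec ∪ {(α, γ)}) Ed b c → Good Ec Ed b c := by
      intro c hc
      induction hc with
      | refl => exact Good.refl
      | @conv a' w hEc _ ih =>
        rcases hEc with hEc | hEc
        · exact Good.conv hEc ih
        · obtain ⟨h1, h2⟩ : a' = α ∧ w = γ := Prod.mk.injEq .. ▸ hEc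
          subst h1; subst h2
          exact Good.div hd (good_of_path hpath ih) ih
      | div hEd' _ _ ih₁ ih₂ => exact Good.div hEd' ih₁ ih₂
    exact key a (h a b)
end

section
/- Let X be a CPC-irreducible tree shift of finite type over alphabet V with extended directed graph representation 𝒢 = (V, E_c, E_d), and suppose V decomposes into N ≥ 2 nonempty strongly connected components V₁, …, V_N of the intrinsic graph 𝒢^c. Then for each component V_i there exist β, γ ∈ V_i, α ∈ V_j with j ≠ i, such that the 1-block (α,β,γ) is an edge of 𝒢 (i.e., (α,β) ∈ E_c with β = γ, or (α,β,γ) ∈ E_d). -/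
/-- In a CPC-irreducible TSFT with at least two strongly connected components of
the intrinsic graph, each component receives an edge from another component. -/
theorem stmt13 {V : Type} [Fintype V] (Ec : Set (V × V)) (Ed : Set (V × V × V))
    (hEd : ∀ p ∈ Ed, p.2.1 ≠ p.2.2)
    (hcpc : CPCIrr (XG Ec Ed))
    (N : ℕ) (hN : 2 ≤ N) (comp : Fin N → Set V)
    (hne : ∀ i, (comp i).Nonempty)
    (hdisj : ∀ i j, i ≠ j → Disjoint (comp i) (comp j))
    (hcover : (⋃ i, comp i) = Set.univ)
    (hscc : ∀ i, ∀ a ∈ comp i, ∀ b : V,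
      b ∈ comp i ↔ Relation.ReflTransGen (cEdge Ec) a b ∧
        Relation.ReflTransGen (cEdge Ec) b a) :
    ∀ i, ∃ j, j ≠ i ∧ ∃ α ∈ comp j, ∃ β ∈ comp i, ∃ γ ∈ comp i,
      (β = γ ∧ (α, β) ∈ Ec) ∨ (α, β, γ) ∈ Ed := by
  intro i
  -- pick a component j₀ ≠ i
  obtain ⟨j₀, hj₀⟩ : ∃ j : Fin N, j ≠ i := by
    by_cases h : i = ⟨0, by omega⟩
    · exact ⟨⟨1, by omega⟩, by simp [h, Fin.ext_iff]⟩
    · exact ⟨⟨0, by omega⟩, fun e => h e.symm⟩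
  obtain ⟨α₀, hα₀⟩ := hne j₀
  obtain ⟨β₀, hβ₀⟩ := hne i
  obtain ⟨x, hx, S, ⟨hSfin, hSpc, hScomp⟩, hxroot, hxS⟩ := hcpc α₀ β₀
  -- a bound on the lengths of elements of S
  obtain ⟨M, hM⟩ := (hSfin.image List.length).bddAbove
  have hM' : ∀ g ∈ S, g.length ≤ M := fun g hg => hM ⟨g, hg, rfl⟩
  -- S is nonempty
  have hSne : S.Nonempty := by
    rcases Set.eq_empty_or_nonempty S with h | h
    · obtain ⟨g, hg, -⟩ := hScomp [] (by simp [h])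
      exact absurd hg (by simp [h])
    · exact h
  -- values of x on S are in comp i
  have hS_in : ∀ g ∈ S, x g ∈ comp i := fun g hg => (hxS g hg) ▸ hβ₀
  -- the root value is not in comp i
  have hroot : x [] ∉ comp i := by
    rw [hxroot]
    exact fun hmem => Set.disjoint_left.mp (hdisj j₀ i hj₀) hα₀ hmem
  -- key claim: there is a node outside comp i with both children in comp i
  have key : ∃ g : List Bool, x g ∉ comp i ∧
      x (g ++ [true]) ∈ comp i ∧ x (g ++ [false]) ∈ comp i := by
    have main : ∀ k : ℕ, ∀ w : List Bool,
        (∃ h ∈ S, w <+: h ∧ w ≠ h) → x w ∉ comp i → M - w.length ≤ k →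
        ∃ g : List Bool, x g ∉ comp i ∧
          x (g ++ [true]) ∈ comp i ∧ x (g ++ [false]) ∈ comp i := by
      intro k
      induction k with
      | zero =>
        rintro w ⟨h, hh, hwh, hwne⟩ hw hk
        exfalso
        have h1 : w.length ≤ h.length := hwh.length_le
        have h2 : h.length ≤ M := hM' h hh
        have : w.length = h.length := by omega
        exact hwne (hwh.eq_of_length this)
      | succ k ih =>
        rintro w ⟨h, hh, hwh, hwne⟩ hw hk
        by_cases hboth : x (w ++ [true]) ∈ comp i ∧ x (w ++ [false]) ∈ comp i
        · exact ⟨w, hw, hboth⟩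
        · -- some child is outside comp i
          obtain ⟨b, hb⟩ : ∃ b : Bool, x (w ++ [b]) ∉ comp i := by
            by_contra hcon
            push_neg at hcon
            exact hboth ⟨hcon true, hcon false⟩
          have hclen : (w ++ [b]).length = w.length + 1 := by simp
          -- w ++ [b] is a proper prefix of some element of S
          have hcS : w ++ [b] ∉ S := fun hcs => hb (hS_in _ hcs)
          obtain ⟨g, hgS, hgc'⟩ :=
            hScomp ((w ++ [b]) ++ List.replicate M true) (by
              intro g hg
              have := hM' g hg
              simp [List.length_append]
              omega)
          have hcc' : (w ++ [b]) <+: (w ++ [b]) ++ List.replicate M true :=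
            List.prefix_append _ _
          have hwc : w <+: w ++ [b] := ⟨[b], rfl⟩
          have hwlen : w.length < h.length := by
            rcases lt_or_eq_of_le hwh.length_le with h' | h'
            · exact h'
            · exact absurd (hwh.eq_of_length h') hwne
          have hhM : h.length ≤ M := hM' h hh
          rcases le_or_gt g.length w.length with hle | hlt
          · -- g <+: w : contradicts the prefix code (g, h ∈ S, g <+: h properly)
            exfalso
            have hgw : g <+: w :=
              List.prefix_of_prefix_length_le hgc' (hwc.trans hcc') hle
            have : g = h := hSpc g hgS h hh (hgw.trans hwh)
            have : h.length ≤ w.length := this ▸ hle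
            omega
          · rcases le_or_gt g.length (w ++ [b]).length with hle2 | hlt2
            · -- then g = w ++ [b], contradicting w ++ [b] ∉ S
              exfalso
              have hgc : g <+: w ++ [b] :=
                List.prefix_of_prefix_length_le hgc' hcc' hle2
              have hcg : (w ++ [b]) <+: g :=
                List.prefix_of_prefix_length_le hcc' hgc' (by omega)
              exact hcS
                (hgc.eq_of_length (le_antisymm hgc.length_le hcg.length_le) ▸ hgS)
            · -- w ++ [b] is a proper prefix of g ∈ S: recurse
              have hcg : (w ++ [b]) <+: g :=
                List.prefix_of_prefix_length_le hcc' hgc' (le_of_lt hlt2)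
              refine ih (w ++ [b]) ⟨g, hgS, hcg, ?_⟩ hb ?_
              · intro e
                rw [e] at hlt2
                exact absurd hlt2 (lt_irrefl _)
              · rw [hclen]
                omega
    obtain ⟨h0, hh0⟩ := hSne
    exact main M [] ⟨h0, hh0, List.nil_prefix,
      fun e => hroot (by rw [e]; exact hS_in h0 hh0)⟩ hroot (by omega)
  obtain ⟨g, hg, hgt, hgf⟩ := key
  -- find the component of x g
  have : x g ∈ ⋃ j, comp j := hcover ▸ Set.mem_univ _
  obtain ⟨j, hj⟩ := Set.mem_iUnion.mp this
  refine ⟨j, fun e => hg (e ▸ hj), x g, hj, x (g ++ [true]), hgt,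
    x (g ++ [false]), hgf, ?_⟩
  rcases hx g with ⟨heq, hEc⟩ | ⟨-, hEdm⟩
  · exact Or.inl ⟨heq, hEc⟩
  · exact Or.inr hEdm
end

section
/- Let X be a tree shift over a finite alphabet and x ∈ X. If x is CPC-periodic, i.e., there exists a complete prefix code P ⊆ Σ* \ {ε} with σ_g x = x for every g ∈ P, then x is strongly periodic: the orbit {σ_g x : g ∈ Σ*} is finite. -/
/-- A CPC-periodic point is strongly periodic: its shift orbit is finite. -/
theorem stmt14 {A : Type} [Fintype A] (X : Set (List Bool → A))
    (x : List Bool → A) (hx : x ∈ X)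
    (P : Set (List Bool)) (hP : IsCPC P) (heps : ([] : List Bool) ∉ P)
    (hper : ∀ g ∈ P, (fun h => x (g ++ h)) = x) :
    Set.Finite {y : List Bool → A | ∃ g : List Bool, y = fun h => x (g ++ h)} := by
  obtain ⟨hfin, hpc, hcomp⟩ := hP
  set N : ℕ := hfin.toFinset.sup List.length with hNdef
  have hN : ∀ g ∈ P, g.length ≤ N := fun g hg =>
    Finset.le_sup (f := List.length) (hfin.mem_toFinset.mpr hg)
  have key : ∀ n (g : List Bool), g.length = n →
      ∃ g' : List Bool, g'.length < N + 1 ∧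
        (fun h => x (g ++ h)) = (fun h => x (g' ++ h)) := by
    intro n
    induction n using Nat.strong_induction_on with
    | _ n ih =>
      intro g hg
      by_cases hlen : g.length < N + 1
      · exact ⟨g, hlen, rfl⟩
      · have hge : ∀ p ∈ P, p.length ≤ g.length := fun p hp =>
          (hN p hp).trans (by omega)
        obtain ⟨p, hpP, hpre⟩ := hcomp g hge
        obtain ⟨t, ht⟩ := hpre
        have hplen : 0 < p.length := by
          rcases Nat.eq_zero_or_pos p.length with h0 | h0
          · exact absurd (by rwa [List.length_eq_zero_iff.mp h0] at hpP) heps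
          · exact h0
        have htlen : t.length < n := by
          have := congrArg List.length ht
          simp at this
          omega
        obtain ⟨g', hg', heq⟩ := ih t.length htlen t rfl
        refine ⟨g', hg', ?_⟩
        funext h
        have := congrFun (hper p hpP) (t ++ h)
        calc x (g ++ h) = x (p ++ (t ++ h)) := by rw [← ht]; simp
          _ = x (t ++ h) := this
          _ = x (g' ++ h) := congrFun heq h
  apply Set.Finite.subset ((List.finite_length_lt (α := Bool) (n := N + 1)).image
    (fun g => fun h => x (g ++ h)))
  rintro y ⟨g, rfl⟩
  obtain ⟨g', hg', heq⟩ := key g.length g rfl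
  exact ⟨g', hg', heq.symm⟩
end
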